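/- Interpolation from modular DRUP proofs: given a valid modular DRUP proof π of the unsatisfiability of Φ_s ∧ Φ_m in which every copied clause is over the shared (interface) variables, the formula Itp := ⋀_{c ∈ L_F(π)} ( ⋀ L_B(π^{id(c)}) ⇒ c ) is a Craig interpolant for (Φ_s, Φ_m): Itp is over the shared variables of Φ_s and Φ_m, Φ_s ⊨ Itp, and Itp ∧ Φ_m is unsatisfiable. -/

import Mathlib

/-!
Replay the proof against an assignment. Every step that adds a clause to a module is sound for
that module, except that a copied clause is only justified in its source module. A model of
`Φs` that satisfies the backward clauses `L_B` copied so far therefore satisfies every clause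
derived in `s` so far, in particular every forward clause `c` under the hypotheses
`L_B(π^{id(c)})`. Dually, a model of `Φm` and of the interpolant satisfies every clause derived
in `m`, hence the final empty clause, which is absurd. The interpolant mentions only copied
clauses, which are over the shared variables.
-/

/-- Propositional variables. -/
abbrev Var := ℕ
/-- A literal is a variable together with a polarity. -/
abbrev Lit := Var × Bool
/-- A clause is a finite set of literals. -/
abbrev Clause := Finset Lit
/-- A total truth assignment. -/
abbrev Assignment := Var → Bool

/-- Negation of a literal. -/
def Lit.neg (l : Lit) : Lit := (l.1, !l.2)

/-- An assignment satisfies a literal. -/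
def satLit (σ : Assignment) (l : Lit) : Prop := σ l.1 = l.2
/-- An assignment satisfies a clause (some literal is true). -/
def satClause (σ : Assignment) (C : Clause) : Prop := ∃ l ∈ C, satLit σ l
/-- An assignment satisfies a set of clauses. -/
def satSet (σ : Assignment) (Γ : Set Clause) : Prop := ∀ C ∈ Γ, satClause σ C
/-- Semantic consequence: every model of Γ satisfies C. -/
def entails (Γ : Set Clause) (C : Clause) : Prop :=
  ∀ σ : Assignment, satSet σ Γ → satClause σ C

/-- Unit-propagation closure: the least set of literals containing the
assumptions `A` and closed under the unit-propagation rule for clauses of `Γ`: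
if all literals of a clause but one are falsified (their negations derived),
the remaining literal is derived. -/
inductive UPC (Γ : Set Clause) (A : Set Lit) : Lit → Prop
  | assm {l : Lit} : l ∈ A → UPC Γ A l
  | prop {C : Clause} {l : Lit} : C ∈ Γ → l ∈ C →
      (∀ l' ∈ C, l' ≠ l → UPC Γ A (Lit.neg l')) → UPC Γ A l

/-- Unit propagation from `Γ` under assumptions `A` reaches a conflict:
some clause of `Γ` has all its literals falsified by the closure. -/
def upConflict (Γ : Set Clause) (A : Set Lit) : Prop :=
  ∃ C ∈ Γ, ∀ l ∈ C, UPC Γ A (Lit.neg l)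

/-- `RUP Γ C` (written `Γ ⊢_UP C`): unit propagation from `Γ` together with the
negations of the literals of `C` reaches a conflict. -/
def RUP (Γ : Set Clause) (C : Clause) : Prop :=
  upConflict Γ {l | ∃ m ∈ C, l = Lit.neg m}

/-- The two modules: secondary `s` and main `m`. -/
inductive ModIdx | s | m
deriving DecidableEq

/-- A step of a modular DRUP proof. -/
inductive MStep
  | asserted (idx : ModIdx) (c : Clause)
  | rup (idx : ModIdx) (c : Clause)
  | cp (src dst : ModIdx) (c : Clause)
  | del (idx : ModIdx) (c : Clause)
deriving DecidableEq

/-- A step adds clause `c` to module `idx` (by assertion, rup, or copy into `idx`). -/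
def MStep.addsTo : MStep → ModIdx → Clause → Prop
  | .asserted i c, j, d => i = j ∧ c = d
  | .rup i c, j, d => i = j ∧ c = d
  | .cp _ i c, j, d => i = j ∧ c = d
  | .del _ _, _, _ => False

/-- Active clauses of module `idx`: added to `idx` and not later deleted from `idx`. -/
def mactive (π : List MStep) (idx : ModIdx) : Set Clause :=
  {c | ∃ i, ∃ hi : i < π.length, (π[i]'hi).addsTo idx c ∧
      ∀ k, ∀ hk : k < π.length, i < k → (π[k]'hk) ≠ MStep.del idx c}

/-- All clauses asserted into module `idx`. -/
def allasserted (π : List MStep) (idx : ModIdx) : Set Clause :=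
  {c | MStep.asserted idx c ∈ π}

/-- Validity of a modular DRUP proof: every rup step is RUP w.r.t. the active
clauses of its module, every copy step's clause is RUP in its source module,
and the final step adds ⊥ to module `m` (by rup or by copy from `s`). -/
def validModular (π : List MStep) : Prop :=
  (∀ i, ∀ hi : i < π.length, ∀ idx c,
      (π[i]'hi) = MStep.rup idx c → RUP (mactive (π.take i) idx) c) ∧
  (∀ i, ∀ hi : i < π.length, ∀ src dst c,
      (π[i]'hi) = MStep.cp src dst c → RUP (mactive (π.take i) src) c) ∧
  ∃ hne : π ≠ [],
    π.getLast hne = MStep.rup ModIdx.m ∅ ∨ π.getLast hne = MStep.cp ModIdx.s ModIdx.m ∅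

/-- The proof contains no deletion steps. -/
def noDel (π : List MStep) : Prop := ∀ st ∈ π, ∀ idx c, st ≠ MStep.del idx c

/-- Backward clauses of a prefix: clauses copied from `m` to `s`. -/
def LB (π : List MStep) : Set Clause := {c | MStep.cp ModIdx.m ModIdx.s c ∈ π}
/-- Forward clauses of a prefix: clauses copied from `s` to `m`. -/
def LF (π : List MStep) : Set Clause := {c | MStep.cp ModIdx.s ModIdx.m c ∈ π}

/-- Variables occurring in a clause. -/
def clauseVars (C : Clause) : Set Var := {v | ∃ b : Bool, (v, b) ∈ C}
/-- Variables occurring in a set of clauses. -/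
def setVars (Γ : Set Clause) : Set Var := ⋃ C ∈ Γ, clauseVars C

/-- `i` is the position of the first copy step from `s` to `m` for clause `c`. -/
def firstCpF (π : List MStep) (c : Clause) (i : ℕ) : Prop :=
  ∃ hi : i < π.length, (π[i]'hi) = MStep.cp ModIdx.s ModIdx.m c ∧
    ∀ j, ∀ hj : j < π.length, j < i → (π[j]'hj) ≠ MStep.cp ModIdx.s ModIdx.m c

/-- The interpolant `⋀_{c ∈ L_F(π)} (⋀ L_B(π^{id(c)}) ⇒ c)` holds under `σ`. -/
def satItp (π : List MStep) (σ : Assignment) : Prop :=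
  ∀ c : Clause, ∀ i, firstCpF π c i →
    (∀ b ∈ LB (π.take i), satClause σ b) → satClause σ c

lemma satLit_neg {σ : Assignment} {l : Lit} : satLit σ l.neg ↔ ¬ satLit σ l := by
  unfold satLit Lit.neg
  cases σ l.1 <;> cases l.2 <;> simp

lemma UPC.sound {Γ : Set Clause} {A : Set Lit} {σ : Assignment}
    (hΓ : satSet σ Γ) (hA : ∀ l ∈ A, satLit σ l) {l : Lit} (h : UPC Γ A l) : satLit σ l := by
  induction h with
  | assm hl => exact hA _ hl
  | @prop C l hC hl _ ih =>
    obtain ⟨l', hl', hsat⟩ := hΓ C hC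
    by_contra hne
    exact satLit_neg.1 (ih l' hl' fun h => hne (h ▸ hsat)) hsat

lemma RUP.entails {Γ : Set Clause} {C : Clause} (h : RUP Γ C) : entails Γ C := by
  intro σ hΓ
  by_contra hC
  obtain ⟨D, hD, hfalsified⟩ := h
  have hA : ∀ l ∈ {l | ∃ m ∈ C, l = Lit.neg m}, satLit σ l := by
    rintro _ ⟨m, hm, rfl⟩
    exact satLit_neg.2 fun hsat => hC ⟨m, hm, hsat⟩
  obtain ⟨l, hl, hsat⟩ := hΓ D hD
  exact satLit_neg.1 ((hfalsified l hl).sound hΓ hA) hsat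

lemma not_satClause_empty (σ : Assignment) : ¬ satClause σ ∅ := by
  simp [satClause]

lemma satClause_congr {σ σ' : Assignment} {C : Clause}
    (h : ∀ v ∈ clauseVars C, σ v = σ' v) : satClause σ C ↔ satClause σ' C := by
  refine exists_congr fun l => and_congr_right fun hl => ?_
  rw [satLit, satLit, h l.1 ⟨l.2, hl⟩]

def addedBefore (π : List MStep) (k : ℕ) (idx : ModIdx) : Set Clause :=
  {c | ∃ i, ∃ hi : i < π.length, i < k ∧ (π[i]'hi).addsTo idx c}

lemma addedBefore_mono {π : List MStep} {idx : ModIdx} {j k : ℕ} (hjk : j ≤ k) :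
    addedBefore π j idx ⊆ addedBefore π k idx :=
  fun _ ⟨i, hi, hij, hadd⟩ => ⟨i, hi, hij.trans_le hjk, hadd⟩

lemma mactive_take_subset_addedBefore {π : List MStep} {k : ℕ} {idx : ModIdx} :
    mactive (π.take k) idx ⊆ addedBefore π k idx := by
  rintro c ⟨i, hi, hadd, -⟩
  rw [List.length_take, lt_min_iff] at hi
  rw [List.getElem_take] at hadd
  exact ⟨i, hi.2, hi.1, hadd⟩

lemma mem_LB_take {π : List MStep} {k : ℕ} {b : Clause} :
    b ∈ LB (π.take k) ↔
      ∃ i, ∃ hi : i < π.length, i < k ∧ π[i] = MStep.cp ModIdx.m ModIdx.s b := by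
  simp only [LB, Set.mem_ofPred_eq, List.mem_iff_getElem, List.length_take, lt_min_iff,
    List.getElem_take]
  exact ⟨fun ⟨i, hi, h⟩ => ⟨i, hi.2, hi.1, h⟩, fun ⟨i, hi, hik, h⟩ => ⟨i, ⟨hik, hi⟩, h⟩⟩

lemma satClause_of_rup_mactive_take {π : List MStep} {i : ℕ} {idx : ModIdx} {σ : Assignment}
    {c : Clause} (hσ : satSet σ (addedBefore π i idx)) (h : RUP (mactive (π.take i) idx) c) :
    satClause σ c :=
  h.entails σ fun _ hd => hσ _ (mactive_take_subset_addedBefore hd)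

lemma satSet_addedBefore {π : List MStep} (hval : validModular π) {idx : ModIdx}
    {σ : Assignment} (hasserted : ∀ c, MStep.asserted idx c ∈ π → satClause σ c) {k : ℕ}
    (himport : ∀ i, ∀ hi : i < π.length, i < k → ∀ src c, src ≠ idx →
      π[i] = MStep.cp src idx c → satSet σ (addedBefore π i idx) → satClause σ c) :
    satSet σ (addedBefore π k idx) := by
  induction k using Nat.strong_induction_on with
  | _ k ih =>
  rintro c ⟨i, hi, hik, hadd⟩
  have hbefore : satSet σ (addedBefore π i idx) :=
    ih i hik fun j hj hji => himport j hj (hji.trans hik)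
  rcases hst : π[i] with ⟨j, d⟩ | ⟨j, d⟩ | ⟨src, j, d⟩ | ⟨j, d⟩ <;> rw [hst] at hadd
  · obtain ⟨rfl, rfl⟩ := hadd
    exact hasserted d (hst ▸ List.getElem_mem hi)
  · obtain ⟨rfl, rfl⟩ := hadd
    exact satClause_of_rup_mactive_take hbefore (hval.1 i hi _ _ hst)
  · obtain ⟨rfl, rfl⟩ := hadd
    by_cases hsrc : src = j
    · subst hsrc
      exact satClause_of_rup_mactive_take hbefore (hval.2.1 i hi _ _ _ hst)
    · exact himport i hi hik src d hsrc hst hbefore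
  · exact hadd.elim

lemma satSet_addedBefore_s {π : List MStep} {Φs : Set Clause} (hval : validModular π)
    (hs : allasserted π ModIdx.s ⊆ Φs) {σ : Assignment} (hσ : satSet σ Φs) {k : ℕ}
    (hLB : satSet σ (LB (π.take k))) : satSet σ (addedBefore π k ModIdx.s) := by
  refine satSet_addedBefore hval (fun c hc => hσ c (hs hc)) ?_
  rintro i hi hik (_ | _) c hsrc hst -
  · exact absurd rfl hsrc
  · exact hLB c (mem_LB_take.2 ⟨i, hi, hik, hst⟩)

lemma satItp_of_satSet {π : List MStep} {Φs : Set Clause} (hval : validModular π)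
    (hs : allasserted π ModIdx.s ⊆ Φs) {σ : Assignment} (hσ : satSet σ Φs) : satItp π σ :=
  fun _ i ⟨hi, hst, _⟩ hLB =>
    satClause_of_rup_mactive_take (satSet_addedBefore_s hval hs hσ hLB) (hval.2.1 i hi _ _ _ hst)

lemma exists_firstCpF {π : List MStep} {c : Clause} {i : ℕ} (hi : i < π.length)
    (hst : π[i] = MStep.cp ModIdx.s ModIdx.m c) : ∃ j ≤ i, firstCpF π c j := by
  classical
  have hex : ∃ n, ∃ hn : n < π.length, π[n] = MStep.cp ModIdx.s ModIdx.m c := ⟨i, hi, hst⟩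
  obtain ⟨hn, hfind⟩ := Nat.find_spec hex
  exact ⟨Nat.find hex, Nat.find_min' hex ⟨hi, hst⟩, hn, hfind,
    fun j hj hji hcp => Nat.find_min hex hji ⟨hj, hcp⟩⟩

/-- A forward copy `c` at step `i` is justified through its conjunct of the interpolant: the
backward clauses preceding the first copy of `c` were derived in `m` before step `i`. -/
lemma satSet_addedBefore_m {π : List MStep} {Φm : Set Clause} (hval : validModular π)
    (hm : allasserted π ModIdx.m ⊆ Φm) {σ : Assignment} (hσ : satSet σ Φm)
    (hitp : satItp π σ) (k : ℕ) : satSet σ (addedBefore π k ModIdx.m) := by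
  refine satSet_addedBefore hval (fun c hc => hσ c (hm hc)) ?_
  rintro i hi - (_ | _) c hsrc hst hbefore
  · obtain ⟨j, hji, hfirst⟩ := exists_firstCpF hi hst
    refine hitp c j hfirst fun b hb => ?_
    obtain ⟨p, hp, hpj, hcp⟩ := mem_LB_take.1 hb
    exact satClause_of_rup_mactive_take
      (fun d hd => hbefore d (addedBefore_mono (hpj.le.trans hji) hd)) (hval.2.1 p hp _ _ _ hcp)
  · exact absurd rfl hsrc

lemma empty_mem_addedBefore_length {π : List MStep} (hval : validModular π) :
    (∅ : Clause) ∈ addedBefore π π.length ModIdx.m := by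
  obtain ⟨hne, hlast⟩ := hval.2.2
  have hlt : π.length - 1 < π.length := Nat.sub_one_lt (List.length_pos_iff.2 hne).ne'
  refine ⟨π.length - 1, hlt, hlt, ?_⟩
  rw [← List.getLast_eq_getElem hne]
  rcases hlast with h | h <;> rw [h] <;> exact ⟨rfl, rfl⟩

lemma satItp_of_agree {π : List MStep} {V : Set Var}
    (hV : ∀ i, ∀ hi : i < π.length, ∀ src dst c, π[i] = MStep.cp src dst c → clauseVars c ⊆ V)
    {σ σ' : Assignment} (hag : ∀ v ∈ V, σ v = σ' v) (h : satItp π σ) : satItp π σ' := by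
  have hcopied : ∀ i, ∀ hi : i < π.length, ∀ src dst c, π[i] = MStep.cp src dst c →
      (satClause σ c ↔ satClause σ' c) := fun i hi src dst c hst =>
    satClause_congr fun v hv => hag v (hV i hi src dst c hst hv)
  intro c i ⟨hi, hst, hmin⟩ hLB
  refine (hcopied i hi _ _ _ hst).1 (h c i ⟨hi, hst, hmin⟩ fun b hb => ?_)
  obtain ⟨p, hp, -, hcp⟩ := mem_LB_take.1 hb
  exact (hcopied p hp _ _ _ hcp).2 (hLB b hb)

theorem modular_drup_interpolation_general (π : List MStep) (Φs Φm : Set Clause)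
    (hval : validModular π)
    (hs : allasserted π ModIdx.s ⊆ Φs) (hm : allasserted π ModIdx.m ⊆ Φm)
    (hshared : ∀ i, ∀ hi : i < π.length, ∀ src dst cls,
        (π[i]'hi) = MStep.cp src dst cls →
        clauseVars cls ⊆ setVars Φs ∩ setVars Φm) :
    (∀ σ σ' : Assignment, (∀ v ∈ setVars Φs ∩ setVars Φm, σ v = σ' v) →
        (satItp π σ ↔ satItp π σ')) ∧
    (∀ σ : Assignment, satSet σ Φs → satItp π σ) ∧
    ¬ ∃ σ : Assignment, satItp π σ ∧ satSet σ Φm := by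
  refine ⟨fun σ σ' hag => ⟨satItp_of_agree hshared hag,
      satItp_of_agree hshared fun v hv => (hag v hv).symm⟩,
    fun σ hσ => satItp_of_satSet hval hs hσ, ?_⟩
  rintro ⟨σ, hitp, hσ⟩
  exact not_satClause_empty σ
    (satSet_addedBefore_m hval hm hσ hitp _ _ (empty_mem_addedBefore_length hval))

/-- the formula `⋀_{c ∈ L_F(π)} (⋀ L_B(π^{id(c)}) ⇒ c)` extracted
from a valid modular DRUP proof whose copied clauses are over the shared
variables is a Craig interpolant for `(Φs, Φm)`: it depends only on the shared
variables, is entailed by `Φs`, and is inconsistent with `Φm`. -/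
theorem modular_drup_interpolation (π : List MStep) (Φs Φm : Set Clause)
    (hval : validModular π) (hnd : noDel π)
    (hs : allasserted π ModIdx.s ⊆ Φs) (hm : allasserted π ModIdx.m ⊆ Φm)
    (hshared : ∀ i, ∀ hi : i < π.length, ∀ src dst cls,
        (π[i]'hi) = MStep.cp src dst cls →
        clauseVars cls ⊆ setVars Φs ∩ setVars Φm) :
    (∀ σ σ' : Assignment, (∀ v ∈ setVars Φs ∩ setVars Φm, σ v = σ' v) →
        (satItp π σ ↔ satItp π σ')) ∧
    (∀ σ : Assignment, satSet σ Φs → satItp π σ) ∧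
    ¬ ∃ σ : Assignment, satItp π σ ∧ satSet σ Φm :=
  modular_drup_interpolation_general π Φs Φm hval hs hm hshared
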